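/- Weyl's inequality for singular values: let W₁, W₂ ∈ ℝ^{m×n} with m ≥ n, with singular values ordered decreasingly σ₁ ≥ ... ≥ σ_n for each matrix. Then for positive integers i, j with i + j − 1 ≤ n, we have σ_{i+j−1}(W₁ + W₂) ≤ σ_i(W₁) + σ_j(W₂). -/

import Mathlib

/-!
The squares of the singular values of `W` are the eigenvalues of `WᵀW`, and
`‖W x‖² = ⟪x, WᵀW x⟫`. Hence on the span of the eigenvectors of `WᵀW` with eigenvalue at most
`σ_i(W)²`, a subspace of dimension at least `n - i`, we have `‖W x‖ ≤ σ_i(W) ‖x‖`; dually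
`σ_k(W) ‖x‖ ≤ ‖W x‖` on a subspace of dimension at least `k + 1`. For `k = i + j` the three
subspaces for `W₁`, `W₂` and `W₁ + W₂` have dimensions summing to more than `2n`, so they share a
nonzero vector `x`, and the triangle inequality for `(W₁ + W₂) x` gives the claim.
-/

open Matrix

/-- The `k`-th largest singular value (0-indexed) of a real matrix `W`:
the square root of the `k`-th largest eigenvalue of `WᵀW`. -/
noncomputable def singularValue {m n : ℕ} (W : Matrix (Fin m) (Fin n) ℝ) (k : Fin n) : ℝ :=
  Real.sqrt
    ((Matrix.isHermitian_conjTranspose_mul_self W).eigenvalues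
      (Tuple.sort (Matrix.isHermitian_conjTranspose_mul_self W).eigenvalues k.rev))

open Finset Module
open scoped InnerProductSpace

namespace Submodule

variable {K V : Type*} [DivisionRing K] [AddCommGroup V] [Module K V] [FiniteDimensional K V]

theorem finrank_add_finrank_le_finrank_add_finrank_inf (s t : Submodule K V) :
    finrank K s + finrank K t ≤ finrank K V + finrank K ↥(s ⊓ t) := by
  rw [← finrank_sup_add_finrank_inf_eq]
  exact Nat.add_le_add_right (finrank_le _) _

theorem exists_mem_inf_inf_ne_zero_of_finrank_lt (s t u : Submodule K V)
    (h : 2 * finrank K V < finrank K s + finrank K t + finrank K u) :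
    ∃ x ∈ s ⊓ t ⊓ u, x ≠ 0 := by
  by_contra! hx
  have hdisj : Disjoint (s ⊓ t) u := disjoint_def.mpr fun x hst hu ↦ hx x ⟨hst, hu⟩
  have := finrank_add_finrank_le_of_disjoint hdisj
  have := finrank_add_finrank_le_finrank_add_finrank_inf s t
  omega

end Submodule

theorem Tuple.add_one_le_card_filter_le_sort {α : Type*} [LinearOrder α] {n : ℕ} (f : Fin n → α)
    (t : Fin n) : t.val + 1 ≤ #{k | f k ≤ f (Tuple.sort f t)} := by
  calc t.val + 1 = #((Iic t).map (Tuple.sort f).toEmbedding) := by simp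
    _ ≤ _ := card_le_card fun k hk ↦ by
      obtain ⟨l, hl, rfl⟩ := mem_map.mp hk
      simpa using Tuple.monotone_sort f (mem_Iic.mp hl)

theorem Tuple.sub_le_card_filter_sort_le {α : Type*} [LinearOrder α] {n : ℕ} (f : Fin n → α)
    (t : Fin n) : n - t.val ≤ #{k | f (Tuple.sort f t) ≤ f k} := by
  calc n - t.val = #((Ici t).map (Tuple.sort f).toEmbedding) := by simp
    _ ≤ _ := card_le_card fun k hk ↦ by
      obtain ⟨l, hl, rfl⟩ := mem_map.mp hk
      simpa using Tuple.monotone_sort f (mem_Ici.mp hl)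

namespace Matrix.IsHermitian

variable {ι : Type*} [Fintype ι] [DecidableEq ι] {A : Matrix ι ι ℝ} (hA : A.IsHermitian)

theorem toEuclideanLin_eigenvectorBasis (k : ι) :
    toEuclideanLin A (hA.eigenvectorBasis k) = hA.eigenvalues k • hA.eigenvectorBasis k := by
  ext x
  simpa using congrFun (hA.mulVec_eigenvectorBasis k) x

theorem eigenvectorBasis_repr_toEuclideanLin (x : EuclideanSpace ℝ ι) (k : ι) :
    hA.eigenvectorBasis.repr (toEuclideanLin A x) k =
      hA.eigenvalues k * hA.eigenvectorBasis.repr x k := by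
  rw [OrthonormalBasis.repr_apply_apply, OrthonormalBasis.repr_apply_apply,
    ← isSymmetric_toEuclideanLin_iff.mpr hA, toEuclideanLin_eigenvectorBasis,
    real_inner_smul_left]

theorem inner_toEuclideanLin_self (x : EuclideanSpace ℝ ι) :
    ⟪x, toEuclideanLin A x⟫_ℝ = ∑ k, hA.eigenvalues k * hA.eigenvectorBasis.repr x k ^ 2 := by
  rw [← hA.eigenvectorBasis.repr.inner_map_map, PiLp.inner_apply]
  refine sum_congr rfl fun k _ ↦ ?_
  rw [eigenvectorBasis_repr_toEuclideanLin, real_inner_eq_re_inner, RCLike.inner_apply]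
  simp only [conj_trivial, RCLike.re_to_real]
  ring

theorem norm_sq_eq_sum_eigenvectorBasis_repr (x : EuclideanSpace ℝ ι) :
    ‖x‖ ^ 2 = ∑ k, hA.eigenvectorBasis.repr x k ^ 2 := by
  rw [← hA.eigenvectorBasis.repr.norm_map, EuclideanSpace.real_norm_sq_eq]

noncomputable def eigenvectorSpan (s : Finset ι) : Submodule ℝ (EuclideanSpace ℝ ι) :=
  Submodule.span ℝ (hA.eigenvectorBasis '' s)

theorem finrank_eigenvectorSpan (s : Finset ι) : finrank ℝ (hA.eigenvectorSpan s) = #s := by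
  rw [eigenvectorSpan, ← Subtype.range_coe (s := (s : Set ι)), ← Set.range_comp,
    finrank_span_eq_card (hA.eigenvectorBasis.orthonormal.linearIndependent.comp _
      Subtype.coe_injective)]
  simp

theorem eigenvectorBasis_repr_eq_zero {s : Finset ι} {x : EuclideanSpace ℝ ι}
    (hx : x ∈ hA.eigenvectorSpan s) {k : ι} (hk : k ∉ s) : hA.eigenvectorBasis.repr x k = 0 := by
  rw [eigenvectorSpan, ← hA.eigenvectorBasis.coe_toBasis, Module.Basis.mem_span_image,
    Finsupp.support_subset_iff] at hx
  simpa using hx k hk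

theorem inner_toEuclideanLin_self_le {s : Finset ι} {c : ℝ} (hs : ∀ k ∈ s, hA.eigenvalues k ≤ c)
    {x : EuclideanSpace ℝ ι} (hx : x ∈ hA.eigenvectorSpan s) :
    ⟪x, toEuclideanLin A x⟫_ℝ ≤ c * ‖x‖ ^ 2 := by
  rw [inner_toEuclideanLin_self, norm_sq_eq_sum_eigenvectorBasis_repr hA, mul_sum]
  refine sum_le_sum fun k _ ↦ ?_
  by_cases hk : k ∈ s
  · exact mul_le_mul_of_nonneg_right (hs k hk) (sq_nonneg _)
  · simp [hA.eigenvectorBasis_repr_eq_zero hx hk]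

theorem le_inner_toEuclideanLin_self {s : Finset ι} {c : ℝ} (hs : ∀ k ∈ s, c ≤ hA.eigenvalues k)
    {x : EuclideanSpace ℝ ι} (hx : x ∈ hA.eigenvectorSpan s) :
    c * ‖x‖ ^ 2 ≤ ⟪x, toEuclideanLin A x⟫_ℝ := by
  rw [inner_toEuclideanLin_self, norm_sq_eq_sum_eigenvectorBasis_repr hA, mul_sum]
  refine sum_le_sum fun k _ ↦ ?_
  by_cases hk : k ∈ s
  · exact mul_le_mul_of_nonneg_right (hs k hk) (sq_nonneg _)
  · simp [hA.eigenvectorBasis_repr_eq_zero hx hk]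

end Matrix.IsHermitian

theorem Matrix.norm_toEuclideanLin_sq {m n : Type*} [Fintype m] [Fintype n] [DecidableEq n]
    (W : Matrix m n ℝ) (x : EuclideanSpace ℝ n) :
    ‖toEuclideanLin W x‖ ^ 2 = ⟪x, toEuclideanLin (Wᴴ * W) x⟫_ℝ := by
  classical
  rw [toLpLin_mul_same, LinearMap.comp_apply, toEuclideanLin_conjTranspose_eq_adjoint,
    LinearMap.adjoint_inner_right, real_inner_self_eq_norm_sq]

theorem exists_norm_toEuclideanLin_le_singularValue_mul {m n : ℕ} (W : Matrix (Fin m) (Fin n) ℝ)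
    (i : Fin n) : ∃ V : Submodule ℝ (EuclideanSpace ℝ (Fin n)), n - i.val ≤ finrank ℝ V ∧
      ∀ x ∈ V, ‖toEuclideanLin W x‖ ≤ singularValue W i * ‖x‖ := by
  set hA := isHermitian_conjTranspose_mul_self W
  set c := hA.eigenvalues (Tuple.sort hA.eigenvalues i.rev)
  refine ⟨hA.eigenvectorSpan {k | hA.eigenvalues k ≤ c}, ?_, fun x hx ↦ ?_⟩
  · rw [hA.finrank_eigenvectorSpan]
    refine le_trans ?_ (Tuple.add_one_le_card_filter_le_sort hA.eigenvalues i.rev)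
    rw [Fin.val_rev]
    omega
  · have hq := hA.inner_toEuclideanLin_self_le (fun k hk ↦ (mem_filter.mp hk).2) hx
    rw [← norm_toEuclideanLin_sq] at hq
    calc ‖toEuclideanLin W x‖ = √(‖toEuclideanLin W x‖ ^ 2) := (Real.sqrt_sq (norm_nonneg _)).symm
      _ ≤ √(c * ‖x‖ ^ 2) := Real.sqrt_le_sqrt hq
      _ = singularValue W i * ‖x‖ := by
        rw [Real.sqrt_mul' _ (sq_nonneg _), Real.sqrt_sq (norm_nonneg _)]
        rfl

theorem exists_singularValue_mul_le_norm_toEuclideanLin {m n : ℕ} (W : Matrix (Fin m) (Fin n) ℝ)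
    (i : Fin n) : ∃ V : Submodule ℝ (EuclideanSpace ℝ (Fin n)), i.val + 1 ≤ finrank ℝ V ∧
      ∀ x ∈ V, singularValue W i * ‖x‖ ≤ ‖toEuclideanLin W x‖ := by
  set hA := isHermitian_conjTranspose_mul_self W
  set c := hA.eigenvalues (Tuple.sort hA.eigenvalues i.rev)
  refine ⟨hA.eigenvectorSpan {k | c ≤ hA.eigenvalues k}, ?_, fun x hx ↦ ?_⟩
  · rw [hA.finrank_eigenvectorSpan]
    refine le_trans ?_ (Tuple.sub_le_card_filter_sort_le hA.eigenvalues i.rev)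
    rw [Fin.val_rev]
    omega
  · have hq := hA.le_inner_toEuclideanLin_self (fun k hk ↦ (mem_filter.mp hk).2) hx
    rw [← norm_toEuclideanLin_sq] at hq
    calc singularValue W i * ‖x‖ = √(c * ‖x‖ ^ 2) := by
          rw [Real.sqrt_mul' _ (sq_nonneg _), Real.sqrt_sq (norm_nonneg _)]
          rfl
      _ ≤ √(‖toEuclideanLin W x‖ ^ 2) := Real.sqrt_le_sqrt hq
      _ = ‖toEuclideanLin W x‖ := Real.sqrt_sq (norm_nonneg _)

theorem weyl_inequality_singularValues_general {m n : ℕ}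
    (W₁ W₂ : Matrix (Fin m) (Fin n) ℝ) (i j : Fin n) (hij : i.val + j.val < n) :
    singularValue (W₁ + W₂) ⟨i.val + j.val, hij⟩ ≤
      singularValue W₁ i + singularValue W₂ j := by
  obtain ⟨V₁, hV₁, hW₁⟩ := exists_norm_toEuclideanLin_le_singularValue_mul W₁ i
  obtain ⟨V₂, hV₂, hW₂⟩ := exists_norm_toEuclideanLin_le_singularValue_mul W₂ j
  obtain ⟨V, hV, hW⟩ := exists_singularValue_mul_le_norm_toEuclideanLin (W₁ + W₂) ⟨_, hij⟩
  obtain ⟨x, ⟨⟨hx₁, hx₂⟩, hx⟩, hx₀⟩ := Submodule.exists_mem_inf_inf_ne_zero_of_finrank_lt V₁ V₂ V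
    (by rw [finrank_euclideanSpace_fin]; dsimp only at hV; omega)
  refine le_of_mul_le_mul_right ?_ (norm_pos_iff.mpr hx₀)
  calc singularValue (W₁ + W₂) ⟨_, hij⟩ * ‖x‖ ≤ ‖toEuclideanLin (W₁ + W₂) x‖ := hW x hx
    _ ≤ ‖toEuclideanLin W₁ x‖ + ‖toEuclideanLin W₂ x‖ := by
      rw [map_add, LinearMap.add_apply]
      exact norm_add_le _ _
    _ ≤ singularValue W₁ i * ‖x‖ + singularValue W₂ j * ‖x‖ := add_le_add (hW₁ x hx₁) (hW₂ x hx₂)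
    _ = (singularValue W₁ i + singularValue W₂ j) * ‖x‖ := (add_mul _ _ _).symm

/-- Weyl's inequality for singular values: for `W₁, W₂ ∈ ℝ^{m×n}` with `m ≥ n`,
and (0-indexed) indices `i, j` with `i + j < n`,
`σ_{i+j}(W₁ + W₂) ≤ σ_i(W₁) + σ_j(W₂)` (this is the 1-indexed
`σ_{i+j-1}(W₁+W₂) ≤ σ_i(W₁) + σ_j(W₂)`). -/
theorem weyl_inequality_singularValues {m n : ℕ} (hmn : m ≥ n)
    (W₁ W₂ : Matrix (Fin m) (Fin n) ℝ) (i j : Fin n) (hij : i.val + j.val < n) :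
    singularValue (W₁ + W₂) ⟨i.val + j.val, hij⟩ ≤
      singularValue W₁ i + singularValue W₂ j :=
  weyl_inequality_singularValues_general W₁ W₂ i j hij
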